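/- Over a field of characteristic zero, the map sending a derivation f of the free Lie algebra L on the symplectic space V with f(ω)=0 to its restriction f₁ = f|_V ∈ Hom(V, L) ≅ V* ⊗ L ≅ V ⊗ L (using the symplectic form to identify V* with V) is injective, and its image lies in the kernel h of the bracketing map V ⊗ L → L. Conversely, every element of h arises from a unique derivation killing ω, giving a linear isomorphism ℓ ≅ h. -/

import Mathlib

open FreeLieAlgebra TensorProduct

/-- `ω = Σᵢ [pᵢ, qᵢ]` in the free Lie algebra on the symplectic basis. -/
noncomputable def omega7 (n : ℕ) : FreeLieAlgebra ℚ (Fin n ⊕ Fin n) :=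
  ∑ i : Fin n, ⁅of ℚ ((Sum.inl i : Fin n ⊕ Fin n)), of ℚ (Sum.inr i)⁆

/-- Evaluation of a derivation at `ω`, as a linear map; its kernel is `ℓ`, the space of
derivations of the free Lie algebra killing `ω`. -/
noncomputable def evalOmega (n : ℕ) :
    LieDerivation ℚ (FreeLieAlgebra ℚ (Fin n ⊕ Fin n)) (FreeLieAlgebra ℚ (Fin n ⊕ Fin n))
      →ₗ[ℚ] FreeLieAlgebra ℚ (Fin n ⊕ Fin n) where
  toFun f := f (omega7 n)
  map_add' f g := by simp
  map_smul' c f := by simp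

/-- The linear inclusion of the symplectic vector space `V = ℚ^{Fin n ⊕ Fin n}` into the
free Lie algebra on its basis. -/
noncomputable def iotaV (n : ℕ) :
    ((Fin n ⊕ Fin n) → ℚ) →ₗ[ℚ] FreeLieAlgebra ℚ (Fin n ⊕ Fin n) where
  toFun v := ∑ s : Fin n ⊕ Fin n, v s • of ℚ s
  map_add' u v := by simp [add_smul, Finset.sum_add_distrib]
  map_smul' c v := by simp [smul_smul, Finset.smul_sum]

attribute [local instance] LieRing.ofAssociativeRing

/-- The bracketing map `V ⊗ L → L`, `v ⊗ w ↦ [v, w]`; its kernel is `h`. -/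
noncomputable def beta7 (n : ℕ) :
    (((Fin n ⊕ Fin n) → ℚ) ⊗[ℚ] FreeLieAlgebra ℚ (Fin n ⊕ Fin n))
      →ₗ[ℚ] FreeLieAlgebra ℚ (Fin n ⊕ Fin n) :=
  TensorProduct.lift
    ((LieAlgebra.ad ℚ (FreeLieAlgebra ℚ (Fin n ⊕ Fin n))).toLinearMap.comp (iotaV n))


/-!
Derivations `L → M` of a Lie algebra are the same as Lie sections `a ↦ (a, D a)` of the
projection `L ⋉ M → L`, so by the universal property of the free Lie algebra a derivation of
`L = FreeLie(V)` is freely determined by its restriction to the generators. This gives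
`Der(L) ≅ Hom(V, L) ≅ V ⊗ L`, the second step using the symplectic form. Under this isomorphism
evaluation at `ω = Σᵢ [pᵢ, qᵢ]` becomes the bracketing map, because
`f ω = Σᵢ ([pᵢ, f qᵢ] - [qᵢ, f pᵢ])`; hence it restricts to `ℓ ≅ h`.
-/

namespace LieModule

/-- The semidirect sum `L ⋉ M` in which `M` is an abelian ideal. -/
def SemiDirectSum (L M : Type*) := L × M

namespace SemiDirectSum

variable {R L M : Type*} [CommRing R] [LieRing L] [LieAlgebra R L] [AddCommGroup M] [Module R M]

instance : AddCommGroup (SemiDirectSum L M) := inferInstanceAs (AddCommGroup (L × M))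

instance : Module R (SemiDirectSum L M) := inferInstanceAs (Module R (L × M))

@[simp] lemma add_fst (x y : SemiDirectSum L M) : (x + y).1 = x.1 + y.1 := rfl

@[simp] lemma add_snd (x y : SemiDirectSum L M) : (x + y).2 = x.2 + y.2 := rfl

@[simp] lemma smul_fst (t : R) (x : SemiDirectSum L M) : (t • x).1 = t • x.1 := rfl

@[simp] lemma smul_snd (t : R) (x : SemiDirectSum L M) : (t • x).2 = t • x.2 := rfl

variable [LieRingModule L M]

instance : Bracket (SemiDirectSum L M) (SemiDirectSum L M) where
  bracket x y := ((⁅x.1, y.1⁆ : L), (⁅x.1, y.2⁆ - ⁅y.1, x.2⁆ : M))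

@[simp] lemma lie_fst (x y : SemiDirectSum L M) : (⁅x, y⁆).1 = ⁅x.1, y.1⁆ := rfl

@[simp] lemma lie_snd (x y : SemiDirectSum L M) : (⁅x, y⁆).2 = ⁅x.1, y.2⁆ - ⁅y.1, x.2⁆ := rfl

instance : LieRing (SemiDirectSum L M) where
  add_lie x y z := Prod.ext (add_lie ..) (by simp; abel)
  lie_add x y z := Prod.ext (lie_add ..) (by simp; abel)
  lie_self x := Prod.ext (lie_self _) (sub_self _)
  leibniz_lie x y z := Prod.ext (leibniz_lie ..) <| by
    simp only [lie_snd, lie_fst, add_snd, lie_sub, lie_lie]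
    abel

variable [LieModule R L M]

instance : LieAlgebra R (SemiDirectSum L M) where
  lie_smul t x y := Prod.ext (lie_smul ..) (by simp [smul_sub])

variable (R L M) in
def fstHom : SemiDirectSum L M →ₗ⁅R⁆ L where
  toFun x := x.1
  map_add' _ _ := rfl
  map_smul' _ _ := rfl
  map_lie' := rfl

variable (R L M) in
def sndLinearMap : SemiDirectSum L M →ₗ[R] M where
  toFun x := x.2
  map_add' _ _ := rfl
  map_smul' _ _ := rfl

end SemiDirectSum

end LieModule

open LieModule

namespace LieDerivation

variable {R L M : Type*} [CommRing R] [LieRing L] [LieAlgebra R L]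
  [AddCommGroup M] [Module R M] [LieRingModule L M] [LieModule R L M]

def graph (D : LieDerivation R L M) : L →ₗ⁅R⁆ SemiDirectSum L M where
  toFun a := (a, D a)
  map_add' a b := Prod.ext rfl (map_add D a b)
  map_smul' t a := Prod.ext rfl (map_smul D t a)
  map_lie' {a b} := Prod.ext rfl (D.apply_lie_eq_sub a b)

def ofSection (φ : L →ₗ⁅R⁆ SemiDirectSum L M) (hφ : (SemiDirectSum.fstHom R L M).comp φ = .id) :
    LieDerivation R L M where
  toLinearMap := (SemiDirectSum.sndLinearMap R L M).comp φ.toLinearMap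
  leibniz' a b := by
    have hfst (c : L) : (φ c).1 = c := LieHom.congr_fun hφ c
    change (φ ⁅a, b⁆).2 = ⁅a, (φ b).2⁆ - ⁅b, (φ a).2⁆
    rw [LieHom.map_lie, SemiDirectSum.lie_snd, hfst, hfst]

end LieDerivation

namespace FreeLieAlgebra

variable {R X M : Type*} [CommRing R]
  [AddCommGroup M] [Module R M] [LieRingModule (FreeLieAlgebra R X) M]
  [LieModule R (FreeLieAlgebra R X) M]

theorem derivation_ext {D₁ D₂ : LieDerivation R (FreeLieAlgebra R X) M}
    (h : ∀ x, D₁ (of R x) = D₂ (of R x)) : D₁ = D₂ := by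
  have hgraph : D₁.graph = D₂.graph := hom_ext fun x ↦ Prod.ext rfl (h x)
  exact LieDerivation.ext fun a ↦ congr_arg Prod.snd (LieHom.congr_fun hgraph a)

noncomputable def derivationOfFun (g : X → M) : LieDerivation R (FreeLieAlgebra R X) M :=
  LieDerivation.ofSection (lift R fun x ↦ (of R x, g x)) <|
    hom_ext fun x ↦ congr_arg Prod.fst (lift_of_apply (L := SemiDirectSum _ M) _ x)

@[simp] lemma derivationOfFun_of (g : X → M) (x : X) :
    derivationOfFun (R := R) g (of R x) = g x :=
  congr_arg Prod.snd (lift_of_apply (L := SemiDirectSum _ M) _ x)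

variable (R X M) in
noncomputable def derivationEquiv : LieDerivation R (FreeLieAlgebra R X) M ≃ₗ[R] (X → M) where
  toFun D x := D (of R x)
  map_add' _ _ := rfl
  map_smul' _ _ := rfl
  invFun := derivationOfFun
  left_inv _ := derivation_ext fun x ↦ derivationOfFun_of _ x
  right_inv g := funext (derivationOfFun_of g)

end FreeLieAlgebra

section Symplectic

variable (R ι M : Type*) [CommRing R] [Fintype ι] [DecidableEq ι] [AddCommGroup M] [Module R M]

/-- The identification `Hom(V, M) ≅ V ⊗ M` for `V = R^(ι ⊕ ι)` with basis `pᵢ = inl i`,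
`qᵢ = inr i`, which uses the symplectic form to identify `V*` with `V`. -/
noncomputable def symplecticTensorEquiv : (ι ⊕ ι → M) ≃ₗ[R] ((ι ⊕ ι → R) ⊗[R] M) :=
  { toFun g := Sum.elim (g ∘ Sum.inr) (-(g ∘ Sum.inl))
    invFun g := Sum.elim (-(g ∘ Sum.inr)) (g ∘ Sum.inl)
    map_add' g h := by ext (i | i) <;> simp [add_comm]
    map_smul' t g := by ext (i | i) <;> simp
    left_inv g := by ext (i | i) <;> simp
    right_inv g := by ext (i | i) <;> simp } ≪≫ₗ
  (TensorProduct.comm R _ M ≪≫ₗ TensorProduct.piScalarRight R R M (ι ⊕ ι)).symm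

variable {R ι M} in
theorem symplecticTensorEquiv_apply (g : ι ⊕ ι → M) :
    symplecticTensorEquiv R ι M g = ∑ i : ι,
      (Pi.single (Sum.inl i) (1 : R) ⊗ₜ g (Sum.inr i)
        - Pi.single (Sum.inr i) (1 : R) ⊗ₜ g (Sum.inl i)) := by
  rw [symplecticTensorEquiv, LinearEquiv.trans_apply, LinearEquiv.symm_apply_eq]
  ext (i | i) <;> simp [Pi.single_apply]

end Symplectic

section Main

variable (n : ℕ)

local notation "V" => Fin n ⊕ Fin n → ℚ
local notation "𝔏" => FreeLieAlgebra ℚ (Fin n ⊕ Fin n)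

lemma iotaV_single (s : Fin n ⊕ Fin n) : iotaV n (Pi.single s 1) = of ℚ s := by
  simp [iotaV, Pi.single_apply, -Fintype.sum_sum_type]

noncomputable def restrictionEquiv : LieDerivation ℚ 𝔏 𝔏 ≃ₗ[ℚ] V ⊗[ℚ] 𝔏 :=
  derivationEquiv ℚ _ 𝔏 ≪≫ₗ symplecticTensorEquiv ℚ (Fin n) 𝔏

lemma restrictionEquiv_apply (f : LieDerivation ℚ 𝔏 𝔏) :
    restrictionEquiv n f = ∑ i : Fin n,
      (Pi.single (Sum.inl i) (1 : ℚ) ⊗ₜ f (of ℚ (Sum.inr i))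
        - Pi.single (Sum.inr i) (1 : ℚ) ⊗ₜ f (of ℚ (Sum.inl i))) :=
  symplecticTensorEquiv_apply _

lemma beta7_restrictionEquiv (f : LieDerivation ℚ 𝔏 𝔏) :
    beta7 n (restrictionEquiv n f) = evalOmega n f := by
  simp only [restrictionEquiv_apply, map_sum, map_sub, beta7, TensorProduct.lift.tmul,
    LinearMap.comp_apply, iotaV_single]
  simp [evalOmega, omega7, LieDerivation.apply_lie_eq_sub]

lemma map_ker_evalOmega :
    (LinearMap.ker (evalOmega n)).map (restrictionEquiv n).toLinearMap =
      LinearMap.ker (beta7 n) := by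
  have h : evalOmega n = beta7 n ∘ₗ (restrictionEquiv n).toLinearMap :=
    LinearMap.ext fun f ↦ (beta7_restrictionEquiv n f).symm
  rw [h, LinearMap.ker_comp, Submodule.map_comap_eq_of_surjective (restrictionEquiv n).surjective]

end Main

/-- Over `ℚ` (characteristic zero), restricting a derivation `f` killing `ω`
to `V`, viewed in `Hom(V,L) ≅ V* ⊗ L ≅ V ⊗ L` via the symplectic form, gives an injection
into the kernel `h` of the bracketing map `V ⊗ L → L`, and every element of `h` arises from
a unique such derivation: there is a linear isomorphism `ℓ ≅ h`, sending `f` to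
`Σᵢ (pᵢ ⊗ f(qᵢ) - qᵢ ⊗ f(pᵢ))`. -/
theorem stmt7 (n : ℕ) :
    ∃ e : LinearMap.ker (evalOmega n) ≃ₗ[ℚ] LinearMap.ker (beta7 n),
      ∀ f : LinearMap.ker (evalOmega n),
        (e f : ((Fin n ⊕ Fin n) → ℚ) ⊗[ℚ] FreeLieAlgebra ℚ (Fin n ⊕ Fin n))
          = ∑ i : Fin n,
              ((Pi.single (Sum.inl i : Fin n ⊕ Fin n) (1 : ℚ)) ⊗ₜ[ℚ]
                  (f : LieDerivation ℚ (FreeLieAlgebra ℚ (Fin n ⊕ Fin n))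
                    (FreeLieAlgebra ℚ (Fin n ⊕ Fin n))) (of ℚ (Sum.inr i))
                - (Pi.single (Sum.inr i : Fin n ⊕ Fin n) (1 : ℚ)) ⊗ₜ[ℚ]
                  (f : LieDerivation ℚ (FreeLieAlgebra ℚ (Fin n ⊕ Fin n))
                    (FreeLieAlgebra ℚ (Fin n ⊕ Fin n))) (of ℚ (Sum.inl i))) :=
  ⟨(restrictionEquiv n).ofSubmodules _ _ (map_ker_evalOmega n),
    fun f ↦ restrictionEquiv_apply n f⟩
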